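/- arXiv:1707.06019 — 4 statements merged into one kernel-verified Lean document; each statement's English description precedes it below -/
import Mathlib

section
/- Let K be a number field with [K : ℚ] = 2 that is Galois over ℚ, let σ be the nontrivial element of Gal(K/ℚ), and let p be a prime number that ramifies in K, i.e. there is a nonzero prime ideal 𝔭 of 𝓞_K with 𝔭² = p𝓞_K. Assume every unit of 𝓞_K equals 1 or −1. Let u ∈ Kˣ be such that pⁿ·u ∈ 𝓞_K and pᵐ·u⁻¹ ∈ 𝓞_K for some natural numbers n, m (i.e. u is a unit of the subring 𝓞_K[1/p] of K), and suppose u · σ(u) = 1. Then u = 1 or u = −1. -/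
/-!
Write `a = pⁿu ∈ 𝓞_K`. Since `u` is invertible in `𝓞_K[1/p]`, the ideal `(a)` divides a power of
`(p) = 𝔭²`, hence `(a) = 𝔭ʲ`. The prime `σ𝔭` also squares to `(p)`, so `σ𝔭 = 𝔭` and
`(σa) = 𝔭ʲ` as well; then `a · σa = p²ⁿ` forces `j = 2n`, i.e. `(a) = (pⁿ)`. So `u = a / pⁿ`
is a unit of `𝓞_K`, hence `±1`.
-/

open NumberField

namespace Ideal

variable {R : Type*} [CommRing R] [IsDedekindDomain R]

theorem map_eq_self_of_map_pow_eq_self {σ : R ≃+* R} {𝔭 : Ideal R} (h𝔭 : Prime 𝔭) {k : ℕ}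
    (hk : k ≠ 0) (h : (𝔭 ^ k).map σ = 𝔭 ^ k) : 𝔭.map σ = 𝔭 := by
  have := isPrime_of_prime h𝔭
  have hσ𝔭 : Prime (𝔭.map σ) :=
    prime_of_isPrime ((map_eq_bot_iff_of_injective σ.injective).not.mpr h𝔭.ne_zero)
      (map_isPrime_of_equiv σ)
  have hdvd : 𝔭 ∣ 𝔭.map σ :=
    h𝔭.dvd_of_dvd_pow (n := k) (by rw [← Ideal.map_pow, h]; exact dvd_pow_self 𝔭 hk)
  exact ((prime_dvd_prime_iff_eq h𝔭 hσ𝔭).mp hdvd).symm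

theorem span_singleton_eq_pow_of_span_mul_map {σ : R ≃+* R} {𝔭 : Ideal R} (h𝔭 : Prime 𝔭)
    (hσ𝔭 : 𝔭.map σ = 𝔭) {a : R} {N k : ℕ} (hdvd : span {a} ∣ 𝔭 ^ N)
    (hmul : span {a * σ a} = 𝔭 ^ (2 * k)) : span {a} = 𝔭 ^ k := by
  obtain ⟨j, -, hj⟩ := (dvd_prime_pow h𝔭 N).mp hdvd
  rw [associated_iff_eq] at hj
  have hpow : 𝔭 ^ (2 * j) = 𝔭 ^ (2 * k) := by
    rw [← hmul, ← span_singleton_mul_span_singleton, ← Set.image_singleton, ← map_span, hj,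
      Ideal.map_pow, hσ𝔭, ← pow_add, two_mul]
  have := pow_injective_of_not_isUnit h𝔭.not_isUnit h𝔭.ne_zero hpow
  rw [hj, show j = k by omega]

end Ideal

theorem exists_eq_algebraMap_unit_of_associated {R K : Type*} [CommRing R] [Field K]
    [Algebra R K] [FaithfulSMul R K] {c a : R} {x : K} (hc : c ≠ 0)
    (hx : algebraMap R K c * x = algebraMap R K a) (hca : Associated c a) :
    ∃ w : Rˣ, x = algebraMap R K w := by
  obtain ⟨w, rfl⟩ := hca
  have hc' : algebraMap R K c ≠ 0 :=
    (map_ne_zero_iff _ (FaithfulSMul.algebraMap_injective R K)).mpr hc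
  refine ⟨w, mul_left_cancel₀ hc' ?_⟩
  rw [hx, map_mul]

theorem norm_one_unit_of_Zp_order_eq_pm_one_general (K : Type*) [Field K] [NumberField K]
    (σ : K ≃ₐ[ℚ] K)
    (p : ℕ) (hp : p.Prime)
    (𝔭 : Ideal (𝓞 K)) (h𝔭 : 𝔭.IsPrime) (h𝔭ne : 𝔭 ≠ ⊥)
    (hram : 𝔭 ^ 2 = Ideal.span {(p : 𝓞 K)})
    (hunits : ∀ w : (𝓞 K)ˣ, (w : 𝓞 K) = 1 ∨ (w : 𝓞 K) = -1)
    (u : Kˣ)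
    (hu : ∃ (n : ℕ) (a : 𝓞 K), (p : K) ^ n * (u : K) = algebraMap (𝓞 K) K a)
    (hu' : ∃ (m : ℕ) (b : 𝓞 K), (p : K) ^ m * ((u⁻¹ : Kˣ) : K) = algebraMap (𝓞 K) K b)
    (hnorm : (u : K) * σ (u : K) = 1) :
    (u : K) = 1 ∨ (u : K) = -1 := by
  obtain ⟨n, a, ha⟩ := hu
  obtain ⟨m, b, hb⟩ := hu'
  set τ := RingOfIntegers.mapRingEquiv (σ : K ≃+* K)
  have h𝔭prime : Prime 𝔭 := Ideal.prime_of_isPrime h𝔭ne h𝔭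
  have hinj := FaithfulSMul.algebraMap_injective (𝓞 K) K
  have haτ : a * τ a = (p : 𝓞 K) ^ (2 * n) := hinj <| by
    calc algebraMap _ K (a * τ a) = (p : K) ^ n * u * σ ((p : K) ^ n * u) := by
          rw [ha, map_mul]; rfl
      _ = (p : K) ^ (2 * n) * (u * σ u) := by simp only [map_mul, map_pow, map_natCast]; ring
      _ = _ := by simp [hnorm]
  have hab : a * b = (p : 𝓞 K) ^ (n + m) := hinj <| by
    calc algebraMap _ K (a * b) = (p : K) ^ (n + m) * (u * (u⁻¹ : Kˣ)) := by
          rw [map_mul, ← ha, ← hb]; ring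
      _ = _ := by simp
  have hτ𝔭 : 𝔭.map τ = 𝔭 := Ideal.map_eq_self_of_map_pow_eq_self h𝔭prime two_ne_zero <| by
    rw [hram, Ideal.map_span, Set.image_singleton, map_natCast]
  have hspan : Ideal.span {a} = Ideal.span {(p : 𝓞 K) ^ n} := by
    rw [← Ideal.span_singleton_pow, ← hram, ← pow_mul]
    refine Ideal.span_singleton_eq_pow_of_span_mul_map h𝔭prime hτ𝔭 (N := 2 * (n + m)) ?_ ?_
    · rw [pow_mul, hram, Ideal.span_singleton_pow, ← hab]
      exact Ideal.dvd_span_singleton.mpr (Ideal.mem_span_singleton.mpr (dvd_mul_right a b))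
    · rw [haτ, ← Ideal.span_singleton_pow, ← hram, ← pow_mul, mul_left_comm]
  obtain ⟨w, hw⟩ := exists_eq_algebraMap_unit_of_associated (x := (u : K))
    (pow_ne_zero n (Nat.cast_ne_zero.mpr hp.ne_zero)) (by rwa [map_pow, map_natCast])
    (Ideal.span_singleton_eq_span_singleton.mp hspan).symm
  rcases hunits w with h | h <;> simp [hw, h]

/-- Let `K` be a quadratic number field, Galois over `ℚ`, with nontrivial
automorphism `σ`, in which the prime `p` ramifies (`p𝓞_K = 𝔭²`), and assume every unit of
`𝓞_K` is `±1`. Then every norm-one unit `u` of `𝓞_K[1/p]` equals `1` or `-1`. -/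
theorem norm_one_unit_of_Zp_order_eq_pm_one (K : Type*) [Field K] [NumberField K]
    [IsGalois ℚ K] (h2 : Module.finrank ℚ K = 2)
    (σ : K ≃ₐ[ℚ] K) (hσ : σ ≠ AlgEquiv.refl)
    (p : ℕ) (hp : p.Prime)
    (𝔭 : Ideal (𝓞 K)) (h𝔭 : 𝔭.IsPrime) (h𝔭ne : 𝔭 ≠ ⊥)
    (hram : 𝔭 ^ 2 = Ideal.span {(p : 𝓞 K)})
    (hunits : ∀ w : (𝓞 K)ˣ, (w : 𝓞 K) = 1 ∨ (w : 𝓞 K) = -1)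
    (u : Kˣ)
    (hu : ∃ (n : ℕ) (a : 𝓞 K), (p : K) ^ n * (u : K) = algebraMap (𝓞 K) K a)
    (hu' : ∃ (m : ℕ) (b : 𝓞 K), (p : K) ^ m * ((u⁻¹ : Kˣ) : K) = algebraMap (𝓞 K) K b)
    (hnorm : (u : K) * σ (u : K) = 1) :
    (u : K) = 1 ∨ (u : K) = -1 :=
  norm_one_unit_of_Zp_order_eq_pm_one_general K σ p hp 𝔭 h𝔭 h𝔭ne hram hunits u hu hu' hnorm
end

section
/- Let G be a locally finite simple graph on a vertex type V, let A be an additive commutative group, and let c : V → V → A satisfy: (i) c(u, v) = −c(v, u) whenever u and v are adjacent, and (ii) for every vertex v, the sum of c(v, w) over all neighbors w of v equals 0 (harmonicity). Let W be a path in G (a walk with no repeated vertices) from a vertex s to a vertex t. Then the sum, over all vertices u in the support of W and all neighbors w of u such that the edge {u, w} is not an edge of W, of c(u, w), equals 0. -/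
/-- Let `c` be a harmonic, antisymmetric function on pairs of adjacent
vertices of a locally finite simple graph `G`, with values in an additive commutative group.
For any path `W` in `G`, the sum over the vertices `u` on `W` and the neighbors `w` of `u`
with `s(u, w)` not an edge of `W` of `c u w` vanishes. -/
theorem harmonic_cocycle_path_sum_eq_zero {V : Type*} [DecidableEq V]
    (G : SimpleGraph V) [∀ v : V, Fintype (G.neighborSet v)]
    {A : Type*} [AddCommGroup A] (c : V → V → A)
    (hskew : ∀ u v : V, G.Adj u v → c u v = - c v u)
    (hharm : ∀ v : V, ∑ w ∈ G.neighborFinset v, c v w = 0)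
    {s t : V} (W : G.Walk s t) (hW : W.IsPath) :
    ∑ u ∈ W.support.toFinset,
      ∑ w ∈ (G.neighborFinset u).filter (fun w => s(u, w) ∉ W.edges), c u w = 0 := by
  classical
  have key : ∑ u ∈ W.support.toFinset,
      ∑ w ∈ (G.neighborFinset u).filter (fun w => s(u, w) ∈ W.edges), c u w = 0 := by
    rw [Finset.sum_sigma']
    apply Finset.sum_involution (g := fun p hp => (⟨p.2, p.1⟩ : Σ _ : V, V))
    · intro p hp
      simp only [Finset.mem_sigma, Finset.mem_filter, SimpleGraph.mem_neighborFinset] at hp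
      exact hskew p.1 p.2 hp.2.1 ▸ by simp [hskew p.1 p.2 hp.2.1]
    · intro p hp hne
      simp only [Finset.mem_sigma, Finset.mem_filter, SimpleGraph.mem_neighborFinset] at hp
      intro h
      have : p.1 = p.2 := by
        have := congrArg Sigma.fst h
        simpa using this.symm
      exact hp.2.1.ne this
    · intro p hp
      simp only [Finset.mem_sigma, Finset.mem_filter, SimpleGraph.mem_neighborFinset,
        List.mem_toFinset] at hp ⊢
      refine ⟨W.snd_mem_support_of_mem_edges hp.2.2, hp.2.1.symm, ?_⟩
      rw [Sym2.eq_swap]; exact hp.2.2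
    · intro p hp
      rfl
  have split : ∀ u ∈ W.support.toFinset,
      (∑ w ∈ (G.neighborFinset u).filter (fun w => s(u, w) ∉ W.edges), c u w)
      + (∑ w ∈ (G.neighborFinset u).filter (fun w => s(u, w) ∈ W.edges), c u w)
      = 0 := by
    intro u _
    rw [add_comm, Finset.sum_filter_add_sum_filter_not (G.neighborFinset u)
      (fun w => s(u, w) ∈ W.edges) (c u ·)]
    exact hharm u
  have h0 : ∑ u ∈ W.support.toFinset,
      ((∑ w ∈ (G.neighborFinset u).filter (fun w => s(u, w) ∉ W.edges), c u w)
      + (∑ w ∈ (G.neighborFinset u).filter (fun w => s(u, w) ∈ W.edges), c u w)) = 0 :=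
    Finset.sum_eq_zero split
  rw [Finset.sum_add_distrib, key, add_zero] at h0
  exact h0
end

section
/- Let 𝔸_f = FiniteAdeleRing ℤ ℚ be the finite adele ring of ℚ (the restricted product of the completions of ℚ at the height-one primes of ℤ with respect to their valuation rings). For every unit x of 𝔸_f and every height-one prime v₀ of ℤ, there exists q ∈ ℚˣ such that for every height-one prime v ≠ v₀ of ℤ, the v-component of x · (the image of q)⁻¹ is a unit of the v-adic valuation ring, i.e. has valuation exactly 1. -/
/-!
Since `ℤ` is a principal ideal domain, every height-one prime `v` has a generator `ϖ_v`, of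
`v`-adic valuation `exp (-1)` and of valuation `1` at every other prime. The valuations of the
components of an idele `x` are nonzero and equal to `1` at all but finitely many primes, so a
finite product of powers of the `ϖ_v` is a global `q` having the same valuation as `x` at every
prime; then `x q⁻¹` has valuation `1` everywhere.
-/

open IsDedekindDomain Submodule.IsPrincipal WithZero

open scoped FiniteAdeleRing

namespace IsDedekindDomain

variable {R : Type*} [CommRing R] [IsDedekindDomain R] [IsPrincipalIdealRing R]
  {K : Type*} [Field K] [Algebra R K] [IsFractionRing R K]

namespace HeightOneSpectrum

omit [IsDedekindDomain R] in
theorem generator_ne_zero (v : HeightOneSpectrum R) : generator v.asIdeal ≠ 0 :=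
  (eq_bot_iff_generator_eq_zero v.asIdeal).not.mp v.ne_bot

theorem valuation_generator (v : HeightOneSpectrum R) :
    v.valuation K (algebraMap R K (generator v.asIdeal)) = exp (-1) := by
  rw [valuation_of_algebraMap,
    intValuation_singleton v v.generator_ne_zero (Ideal.span_singleton_generator v.asIdeal).symm]

theorem valuation_generator_of_ne {v w : HeightOneSpectrum R} (hwv : w ≠ v) :
    w.valuation K (algebraMap R K (generator v.asIdeal)) = 1 := by
  rw [valuation_eq_one_iff_notMem]
  intro hmem
  have hvw : v.asIdeal ≤ w.asIdeal := by
    rwa [← Ideal.span_singleton_generator v.asIdeal, Ideal.span_singleton_le_iff_mem]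
  exact hwv (HeightOneSpectrum.ext (v.isMaximal.eq_of_le w.isPrime.ne_top hvw).symm)

theorem exists_valuation_eq {f : HeightOneSpectrum R → ℤᵐ⁰} (hf₀ : ∀ v, f v ≠ 0)
    (hf : ∀ᶠ v in Filter.cofinite, f v = 1) :
    ∃ q : Kˣ, ∀ v, v.valuation K q = f v := by
  let ϖ (w : HeightOneSpectrum R) : Kˣ :=
    Units.mk0 (algebraMap R K (generator w.asIdeal))
      ((map_ne_zero_iff _ (IsFractionRing.injective R K)).mpr w.generator_ne_zero)
  let S := (Filter.eventually_cofinite.mp hf).toFinset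
  refine ⟨∏ w ∈ S, ϖ w ^ (-log (f w)), fun v => ?_⟩
  have hother : ∀ w ≠ v, v.valuation K (ϖ w ^ (-log (f w)) : Kˣ) = 1 := fun w hwv => by
    rw [Units.val_zpow_eq_zpow_val, map_zpow₀, Units.val_mk0, valuation_generator_of_ne hwv.symm,
      one_zpow]
  rw [Units.coe_prod, map_prod]
  by_cases hv : v ∈ S
  · rw [Finset.prod_eq_single_of_mem v hv fun w _ => hother w, Units.val_zpow_eq_zpow_val,
      map_zpow₀, Units.val_mk0, valuation_generator, ← exp_zsmul, smul_eq_mul, mul_neg_one,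
      neg_neg, exp_log (hf₀ v)]
  · rw [Finset.prod_eq_one fun w hw => hother w (ne_of_mem_of_not_mem hw hv)]
    exact (by simpa [S] using hv : f v = 1).symm

end HeightOneSpectrum

namespace FiniteAdeleRing

omit [IsPrincipalIdealRing R] in
theorem valued_algebraMap_apply (k : K) (v : HeightOneSpectrum R) :
    Valued.v (algebraMap K 𝔸ᶠ[R, K] k v) = v.valuation K k :=
  HeightOneSpectrum.valuedAdicCompletion_eq_valuation' v k

theorem exists_valued_mul_unitEmbedding_inv_eq_one (x : 𝔸ᶠ[R, K]ˣ) :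
    ∃ q : Kˣ, ∀ v, Valued.v ((x * (unitEmbedding R K q)⁻¹ : 𝔸ᶠ[R, K]ˣ).val v) = 1 := by
  obtain ⟨hx₀, hx⟩ := isUnit_iff.mp x.isUnit
  have hvx₀ (v : HeightOneSpectrum R) : Valued.v (x.val v) ≠ 0 := by simpa using hx₀ v
  obtain ⟨q, hq⟩ := HeightOneSpectrum.exists_valuation_eq (K := K) hvx₀ hx
  refine ⟨q, fun v => ?_⟩
  have hinv :
      ((unitEmbedding R K q)⁻¹ : 𝔸ᶠ[R, K]ˣ).val = algebraMap K 𝔸ᶠ[R, K] (q⁻¹ : Kˣ) := by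
    rw [← map_inv, unitEmbedding_apply]
  rw [Units.val_mul, hinv]
  change Valued.v (x.val v * algebraMap K 𝔸ᶠ[R, K] _ v) = 1
  rw [map_mul, valued_algebraMap_apply, Units.val_inv_eq_inv_val, map_inv₀, hq v]
  exact mul_inv_cancel₀ (hvx₀ v)

end FiniteAdeleRing

end IsDedekindDomain

/-- (Strong approximation for the finite ideles of `ℚ`.) For every unit `x`
of the finite adele ring of `ℚ` and every height-one prime `v₀` of `ℤ`, there is a global
`q ∈ ℚˣ` such that `x · q⁻¹` has component a unit of the `v`-adic integers (valuation exactly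
`1`) at every height-one prime `v ≠ v₀`. -/
theorem finite_idele_strong_approximation
    (x : (FiniteAdeleRing ℤ ℚ)ˣ) (v₀ : HeightOneSpectrum ℤ) :
    ∃ q : ℚˣ, ∀ v : HeightOneSpectrum ℤ, v ≠ v₀ →
      Valued.v (((x * (Units.map (algebraMap ℚ (FiniteAdeleRing ℤ ℚ)).toMonoidHom q)⁻¹ :
        (FiniteAdeleRing ℤ ℚ)ˣ) : FiniteAdeleRing ℤ ℚ) v) = 1 := by
  obtain ⟨q, hq⟩ := FiniteAdeleRing.exists_valued_mul_unitEmbedding_inv_eq_one x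
  exact ⟨q, fun v _ => hq v⟩
end

section
/- Let F be a field and u a 2×2 matrix over F. Define the polynomial function P_u(x) = −u₁₀·x² + (u₀₀ − u₁₁)·x + u₀₁ (equivalently, P_u(x) is the trace of u · M(x) where M(x) is the matrix with rows (x, −x²) and (1, −x)). Let g be a 2×2 matrix over F with invertible determinant which commutes with u (g·u = u·g). Then for every x ∈ F with g₁₀·x + g₁₁ ≠ 0, one has (g₁₀·x + g₁₁)² · P_u((g₀₀·x + g₀₁)/(g₁₀·x + g₁₁)) = det(g) · P_u(x). -/
/-- The quadratic polynomial `P_u(x) = -u₁₀ x² + (u₀₀ - u₁₁) x + u₀₁`, i.e. the trace of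
`u ⬝ M(x)` where `M(x)` has rows `(x, -x²)` and `(1, -x)`. -/
def quadPoly {F : Type*} [Field F] (u : Matrix (Fin 2) (Fin 2) F) (x : F) : F :=
  -(u 1 0) * x ^ 2 + (u 0 0 - u 1 1) * x + u 0 1

/-- If `g` commutes with `u` and has invertible determinant, then `P_u`
transforms with weight two under the Möbius action of `g`. -/
theorem weight_two_invariance_of_commuting {F : Type*} [Field F]
    (u g : Matrix (Fin 2) (Fin 2) F)
    (hdet : IsUnit g.det) (hcomm : g * u = u * g) :
    ∀ x : F, g 1 0 * x + g 1 1 ≠ 0 →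
      (g 1 0 * x + g 1 1) ^ 2 *
          quadPoly u ((g 0 0 * x + g 0 1) / (g 1 0 * x + g 1 1)) =
        g.det * quadPoly u x := by
  intro x hx
  have h00 := congrFun (congrFun hcomm 0) 0
  have h01 := congrFun (congrFun hcomm 0) 1
  have h10 := congrFun (congrFun hcomm 1) 0
  have h11 := congrFun (congrFun hcomm 1) 1
  simp [Matrix.mul_apply, Fin.sum_univ_two] at h00 h01 h10 h11
  have key : (g 1 0 * x + g 1 1) ^ 2 *
      quadPoly u ((g 0 0 * x + g 0 1) / (g 1 0 * x + g 1 1)) =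
      -(u 1 0) * (g 0 0 * x + g 0 1) ^ 2 +
        (u 0 0 - u 1 1) * (g 0 0 * x + g 0 1) * (g 1 0 * x + g 1 1) +
        u 0 1 * (g 1 0 * x + g 1 1) ^ 2 := by
    unfold quadPoly; field_simp
  rw [key, Matrix.det_fin_two]
  unfold quadPoly
  linear_combination (-(g 1 0 * x + g 1 1) * x) * h00 - (g 1 0 * x + g 1 1) * h01 +
    ((g 0 0 * x + g 0 1) * x) * h10 + (g 0 0 * x + g 0 1) * h11
end
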